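/- arXiv:1805.06812 — 12 statements merged into one kernel-verified Lean document; each statement's English description precedes it below -/
import Mathlib

section
/- The discharge-form Lax curve φ̃_l is strictly concave on (0,∞); that is, for all 0 < h₁ < h₂ and t ∈ (0,1), φ̃_l(t·h₁ + (1−t)·h₂) > t·φ̃_l(h₁) + (1−t)·φ̃_l(h₂). -/
/-- Lax curve through the left state `(hl, vl)`. -/
noncomputable def phil (g hl vl h : ℝ) : ℝ :=
  if h ≤ hl then vl + 2 * Real.sqrt (g * hl) - 2 * Real.sqrt (g * h)
  else vl - (h - hl) * Real.sqrt (g * (h + hl) / (2 * h * hl))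

/-- Discharge-form Lax curve through the left state. -/
noncomputable def philTilde (g hl vl h : ℝ) : ℝ := h * phil g hl vl h

open Real Set Filter

/-!
On the rarefaction branch `φ̃_l(h) = h (v_l + 2√(g h_l) - 2√(g h))`, and on the shock branch
`φ̃_l(h) = v_l h - √(g / (2 h_l)) (h - h_l) √(h (h + h_l))`. Both branches have slope
`v_l - √(g h_l)` at `h_l`, so `φ̃_l` is differentiable on `(0, ∞)`, and its derivative is
strictly decreasing there: on the rarefaction branch because `√h` increases, on the shock
branch because `(4h² + h_l h - h_l²) / (2√(h (h + h_l)))` increases for `h ≥ h_l`. After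
squaring and substituting `h = h_l + x`, the latter becomes a polynomial inequality with
positive coefficients.
-/

theorem hasDerivAt_of_eqOn_Iic_of_eqOn_Ici {f u v : ℝ → ℝ} {c f' : ℝ}
    (hu : HasDerivAt u f' c) (hv : HasDerivAt v f' c)
    (hfu : EqOn f u (Iic c)) (hfv : EqOn f v (Ici c)) : HasDerivAt f f' c := by
  have h := (hu.hasDerivWithinAt.congr hfu (hfu self_mem_Iic)).union
    (hv.hasDerivWithinAt.congr hfv (hfv self_mem_Ici))
  rwa [Iic_union_Ici, hasDerivWithinAt_univ] at h

theorem hasDerivAt_mul_sub_sqrt {g A x : ℝ} (hg : 0 < g) (hx : 0 < x) :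
    HasDerivAt (fun h => h * (A - 2 * √(g * h))) (A - 3 * √(g * x)) x := by
  have hgx : 0 < g * x := mul_pos hg hx
  have hsqrt : HasDerivAt (fun h => √(g * h)) (g * 1 / (2 * √(g * x))) x :=
    ((hasDerivAt_id x).const_mul g).sqrt hgx.ne'
  refine ((hasDerivAt_id' x).mul ((hsqrt.const_mul 2).const_sub A)).congr_deriv ?_
  have hs : √(g * x) ≠ 0 := (sqrt_pos.2 hgx).ne'
  field_simp
  linear_combination mul_self_sqrt hgx.le

noncomputable def shockProfile (k h : ℝ) : ℝ := (h - k) * √(h * (h + k))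

noncomputable def shockSlope (k h : ℝ) : ℝ :=
  (4 * h ^ 2 + k * h - k ^ 2) / (2 * √(h * (h + k)))

theorem hasDerivAt_shockProfile {k h : ℝ} (hk : 0 ≤ k) (hh : 0 < h) :
    HasDerivAt (shockProfile k) (shockSlope k h) h := by
  have hQ : 0 < h * (h + k) := by positivity
  have hsqrt : HasDerivAt (fun x => √(x * (x + k)))
      ((1 * (h + k) + h * 1) / (2 * √(h * (h + k)))) h :=
    ((hasDerivAt_id h).mul ((hasDerivAt_id h).add_const k)).sqrt hQ.ne'
  refine (((hasDerivAt_id' h).sub_const k).mul hsqrt).congr_deriv ?_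
  have hs : √(h * (h + k)) ≠ 0 := (sqrt_pos.2 hQ).ne'
  rw [shockSlope]
  field_simp
  linear_combination 2 * mul_self_sqrt hQ.le

theorem shockSlope_self {k : ℝ} (hk : 0 ≤ k) : shockSlope k k = √2 * k := by
  rw [shockSlope, show k * (k + k) = 2 * k ^ 2 by ring, sqrt_mul zero_le_two, sqrt_sq hk]
  rcases hk.eq_or_lt with rfl | hk
  · simp
  rw [div_eq_iff (by positivity)]
  linear_combination (-2 * k ^ 2) * sq_sqrt zero_le_two

theorem shockSlope_sq_lt_sq {k a b : ℝ} (hk : 0 < k) (hka : k ≤ a) (hab : a < b) :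
    shockSlope k a ^ 2 < shockSlope k b ^ 2 := by
  obtain ⟨x, hx, rfl⟩ : ∃ x, 0 ≤ x ∧ a = k + x := ⟨a - k, by linarith, by ring⟩
  obtain ⟨y, hy, rfl⟩ : ∃ y, 0 < y ∧ b = k + x + y := ⟨b - (k + x), by linarith, by ring⟩
  rw [shockSlope, shockSlope, div_pow, div_pow, mul_pow, mul_pow, sq_sqrt (by positivity),
    sq_sqrt (by positivity),
    div_lt_div_iff₀ (by positivity) (by positivity)]
  have key : 0 < y * (16 * x ^ 2 * y ^ 3 + 64 * x ^ 3 * y ^ 2 + 80 * x ^ 4 * y + 32 * x ^ 5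
      + 48 * k * x * y ^ 3 + 264 * k * x ^ 2 * y ^ 2 + 432 * k * x ^ 3 * y + 216 * k * x ^ 4
      + 32 * k ^ 2 * y ^ 3 + 344 * k ^ 2 * x * y ^ 2 + 840 * k ^ 2 * x ^ 2 * y
      + 560 * k ^ 2 * x ^ 3 + 144 * k ^ 3 * y ^ 2 + 699 * k ^ 3 * x * y + 699 * k ^ 3 * x ^ 2
      + 210 * k ^ 4 * y + 420 * k ^ 4 * x + 96 * k ^ 5) := by positivity
  linear_combination 4 * key

theorem shockSlope_strictMonoOn {k : ℝ} (hk : 0 < k) :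
    StrictMonoOn (shockSlope k) (Ici k) := by
  intro a (ha : k ≤ a) b (hb : k ≤ b) hab
  have hb_nonneg : 0 ≤ shockSlope k b := div_nonneg (by nlinarith) (by positivity)
  exact lt_of_pow_lt_pow_left₀ 2 hb_nonneg (shockSlope_sq_lt_sq hk ha hab)

section LaxCurve

variable {g hl vl : ℝ}

theorem philTilde_eq_of_le {h : ℝ} (hh : h ≤ hl) :
    philTilde g hl vl h = h * (vl + 2 * √(g * hl) - 2 * √(g * h)) := by
  rw [philTilde, phil, if_pos hh]

theorem philTilde_eq_of_ge (hg : 0 ≤ g) (hhl : 0 < hl) {h : ℝ} (hh : hl ≤ h) :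
    philTilde g hl vl h = vl * h - √(g / (2 * hl)) * shockProfile hl h := by
  rcases hh.eq_or_lt with rfl | hh
  · simp [philTilde_eq_of_le, shockProfile, mul_comm]
  have hpos : 0 < h := hhl.trans hh
  have key : h * √(g * (h + hl) / (2 * h * hl)) = √(g / (2 * hl)) * √(h * (h + hl)) := by
    have hsq : h * √(g * (h + hl) / (2 * h * hl))
        = √(h ^ 2 * (g * (h + hl) / (2 * h * hl))) := by
      rw [sqrt_mul (sq_nonneg h), sqrt_sq hpos.le]
    rw [hsq, ← sqrt_mul (by positivity)]
    congr 1
    field_simp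
  rw [philTilde, phil, if_neg hh.not_ge, shockProfile]
  linear_combination (hl - h) * key

theorem sqrt_div_mul_shockSlope_self (hg : 0 ≤ g) (hhl : 0 < hl) :
    √(g / (2 * hl)) * shockSlope hl hl = √(g * hl) := by
  rw [shockSlope_self hhl.le, ← mul_assoc, ← sqrt_mul (by positivity), ← sqrt_sq hhl.le,
    ← sqrt_mul (by positivity), sqrt_sq hhl.le]
  congr 1
  field_simp

noncomputable def philTildeDeriv (g hl vl h : ℝ) : ℝ :=
  if h ≤ hl then vl + 2 * √(g * hl) - 3 * √(g * h)
  else vl - √(g / (2 * hl)) * shockSlope hl h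

theorem hasDerivAt_philTilde (hg : 0 < g) (hhl : 0 < hl) {h : ℝ} (hh : 0 < h) :
    HasDerivAt (philTilde g hl vl) (philTildeDeriv g hl vl h) h := by
  have eq_rare : EqOn (philTilde g hl vl) (fun x => x * (vl + 2 * √(g * hl) - 2 * √(g * x)))
      (Iic hl) := fun x hx => philTilde_eq_of_le hx
  have eq_shock : EqOn (philTilde g hl vl) (fun x => vl * x - √(g / (2 * hl)) * shockProfile hl x)
      (Ici hl) := fun x hx => philTilde_eq_of_ge hg.le hhl hx
  have deriv_rare : HasDerivAt (fun x => x * (vl + 2 * √(g * hl) - 2 * √(g * x)))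
      (vl + 2 * √(g * hl) - 3 * √(g * h)) h := hasDerivAt_mul_sub_sqrt hg hh
  have deriv_shock : HasDerivAt (fun x => vl * x - √(g / (2 * hl)) * shockProfile hl x)
      (vl - √(g / (2 * hl)) * shockSlope hl h) h := by
    have := ((hasDerivAt_id' h).const_mul vl).sub
      ((hasDerivAt_shockProfile hhl.le hh).const_mul (√(g / (2 * hl))))
    rwa [mul_one] at this
  rcases lt_trichotomy h hl with hlt | rfl | hgt
  · rw [philTildeDeriv, if_pos hlt.le]
    exact deriv_rare.congr_of_eventuallyEq (eventuallyEq_of_mem (Iic_mem_nhds hlt) eq_rare)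
  · rw [philTildeDeriv, if_pos le_rfl]
    refine hasDerivAt_of_eqOn_Iic_of_eqOn_Ici deriv_rare (deriv_shock.congr_deriv ?_)
      eq_rare eq_shock
    rw [sqrt_div_mul_shockSlope_self hg.le hhl]
    ring
  · rw [philTildeDeriv, if_neg hgt.not_ge]
    exact deriv_shock.congr_of_eventuallyEq (eventuallyEq_of_mem (Ici_mem_nhds hgt) eq_shock)

theorem philTildeDeriv_strictAntiOn (hg : 0 < g) (hhl : 0 < hl) :
    StrictAntiOn (philTildeDeriv g hl vl) (Ioi 0) := by
  intro a (ha : 0 < a) b (hb : 0 < b) hab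
  have hc : 0 < √(g / (2 * hl)) := sqrt_pos.2 (by positivity)
  have sqrt_mul_lt {x y : ℝ} (hx : 0 ≤ x) (hxy : x < y) : √(g * x) < √(g * y) :=
    sqrt_lt_sqrt (by positivity) (mul_lt_mul_of_pos_left hxy hg)
  rcases le_or_gt b hl with hbl | hbl
  · rw [philTildeDeriv, philTildeDeriv, if_pos (hab.le.trans hbl), if_pos hbl]
    linarith [sqrt_mul_lt ha.le hab]
  rw [philTildeDeriv, philTildeDeriv, if_neg hbl.not_ge]
  rcases le_or_gt a hl with hal | hal
  · rw [if_pos hal]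
    have hslope := mul_lt_mul_of_pos_left
      (shockSlope_strictMonoOn hhl self_mem_Ici (mem_Ici.2 hbl.le) hbl) hc
    rw [sqrt_div_mul_shockSlope_self hg.le hhl] at hslope
    have hsqrt_le : √(g * a) ≤ √(g * hl) := sqrt_le_sqrt (mul_le_mul_of_nonneg_left hal hg.le)
    linarith
  · rw [if_neg hal.not_ge]
    linarith [mul_lt_mul_of_pos_left
      (shockSlope_strictMonoOn hhl (mem_Ici.2 hal.le) (mem_Ici.2 hbl.le) hab) hc]

theorem philTilde_strictConcaveOn (hg : 0 < g) (hhl : 0 < hl) :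
    StrictConcaveOn ℝ (Ioi 0) (philTilde g hl vl) := by
  refine StrictAntiOn.strictConcaveOn_of_deriv (convex_Ioi 0)
    (fun x hx => (hasDerivAt_philTilde hg hhl hx).continuousAt.continuousWithinAt) ?_
  rw [interior_Ioi]
  intro a ha b hb hab
  rw [(hasDerivAt_philTilde hg hhl ha).deriv, (hasDerivAt_philTilde hg hhl hb).deriv]
  exact philTildeDeriv_strictAntiOn hg hhl ha hb hab

end LaxCurve

/-- The discharge-form Lax curve is strictly concave on `(0, ∞)`. -/
theorem philTilde_strictConcave (g hl vl : ℝ) (hg : 0 < g) (hhl : 0 < hl) :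
    ∀ h₁ h₂ t : ℝ, 0 < h₁ → h₁ < h₂ → 0 < t → t < 1 →
      philTilde g hl vl (t * h₁ + (1 - t) * h₂) >
        t * philTilde g hl vl h₁ + (1 - t) * philTilde g hl vl h₂ := by
  intro h₁ h₂ t h₁_pos h₁₂ t_pos t_lt_one
  exact (philTilde_strictConcaveOn hg hhl).2 (mem_Ioi.2 h₁_pos)
    (mem_Ioi.2 (h₁_pos.trans h₁₂)) h₁₂.ne t_pos (sub_pos.2 t_lt_one) (add_sub_cancel t 1)
end

section
/- The Lax curve φ_l is strictly decreasing on (0,∞): for all 0 < h₁ < h₂ one has φ_l(h₁) > φ_l(h₂). -/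
/-!
Both branches are strictly decreasing, and they meet at `h = hl` with value `vl`. For the shock
branch, `(h - hl)² (h + hl) / h = (h - hl) (h - hl² / h)` is a product of two nonnegative
increasing factors on `[hl, ∞)`, so the shock term `(h - hl) √(g (h + hl) / (2 h hl))` is the
square root of an increasing function there.
-/

open Set

variable {g hl : ℝ}

lemma sq_div_le_of_le {a : ℝ} (hhl : 0 < hl) (ha : hl ≤ a) : hl ^ 2 / a ≤ a := by
  rw [div_le_iff₀ (hhl.trans_le ha)]
  nlinarith

lemma strictMonoOn_sub_mul_sub_sq_div (hhl : 0 < hl) :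
    StrictMonoOn (fun h : ℝ => (h - hl) * (h - hl ^ 2 / h)) (Ici hl) := by
  intro a (ha : hl ≤ a) b (hb : hl ≤ b) hab
  have ha_pos : 0 < a := hhl.trans_le ha
  have hsq_div_le : hl ^ 2 / a ≤ a := sq_div_le_of_le hhl ha
  have hsq_div_lt : hl ^ 2 / b < hl ^ 2 / a := div_lt_div_of_pos_left (by positivity) ha_pos hab
  exact mul_lt_mul'' (by linarith) (by linarith) (by linarith) (by linarith)

lemma shock_eq_sqrt (hhl : 0 < hl) {h : ℝ} (hh : hl ≤ h) :
    (h - hl) * √(g * (h + hl) / (2 * h * hl)) =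
      √(g / (2 * hl) * ((h - hl) * (h - hl ^ 2 / h))) := by
  have h_pos : 0 < h := hhl.trans_le hh
  calc (h - hl) * √(g * (h + hl) / (2 * h * hl))
      = √((h - hl) ^ 2) * √(g * (h + hl) / (2 * h * hl)) := by
        rw [Real.sqrt_sq (sub_nonneg.mpr hh)]
    _ = √((h - hl) ^ 2 * (g * (h + hl) / (2 * h * hl))) := (Real.sqrt_mul (sq_nonneg _) _).symm
    _ = √(g / (2 * hl) * ((h - hl) * (h - hl ^ 2 / h))) := by
        congr 1
        field_simp
        ring

lemma shock_strictMonoOn (hg : 0 < g) (hhl : 0 < hl) :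
    StrictMonoOn (fun h => (h - hl) * √(g * (h + hl) / (2 * h * hl))) (Ici hl) := by
  intro a (ha : hl ≤ a) b (hb : hl ≤ b) hab
  simp only [shock_eq_sqrt hhl ha, shock_eq_sqrt hhl hb]
  refine Real.sqrt_lt_sqrt ?_ ?_
  · have : 0 ≤ a - hl ^ 2 / a := sub_nonneg.mpr (sq_div_le_of_le hhl ha)
    have : 0 ≤ a - hl := sub_nonneg.mpr ha
    positivity
  · exact mul_lt_mul_of_pos_left (strictMonoOn_sub_mul_sub_sq_div hhl ha hb hab) (by positivity)

lemma phil_of_le (vl : ℝ) {h : ℝ} (hh : h ≤ hl) :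
    phil g hl vl h = vl + 2 * √(g * hl) - 2 * √(g * h) :=
  if_pos hh

lemma phil_of_ge (vl : ℝ) {h : ℝ} (hh : hl ≤ h) :
    phil g hl vl h = vl - (h - hl) * √(g * (h + hl) / (2 * h * hl)) := by
  rcases hh.lt_or_eq with hlt | rfl
  · exact if_neg hlt.not_ge
  · simp [phil]

lemma phil_strictAntiOn_Ioc (vl : ℝ) (hg : 0 < g) : StrictAntiOn (phil g hl vl) (Ioc 0 hl) := by
  intro a ha b hb hab
  rw [phil_of_le vl ha.2, phil_of_le vl hb.2]
  have : √(g * a) < √(g * b) := Real.sqrt_lt_sqrt (by nlinarith [ha.1]) (by nlinarith)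
  linarith

lemma phil_strictAntiOn_Ici (vl : ℝ) (hg : 0 < g) (hhl : 0 < hl) :
    StrictAntiOn (phil g hl vl) (Ici hl) := by
  intro a ha b hb hab
  rw [phil_of_ge vl ha, phil_of_ge vl hb]
  linarith [shock_strictMonoOn hg hhl ha hb hab]

/-- The Lax curve `φ_l` is strictly decreasing on `(0, ∞)`. -/
theorem phil_strictAnti (g hl vl : ℝ) (hg : 0 < g) (hhl : 0 < hl) :
    ∀ h₁ h₂ : ℝ, 0 < h₁ → h₁ < h₂ → phil g hl vl h₁ > phil g hl vl h₂ := by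
  intro h₁ h₂ h₁_pos h₁₂
  have hanti : StrictAntiOn (phil g hl vl) (Ioc 0 hl ∪ Ici hl) :=
    (phil_strictAntiOn_Ioc vl hg).union (phil_strictAntiOn_Ici vl hg hhl)
      (isGreatest_Ioc hhl) isLeast_Ici
  rw [Ioc_union_Ici_eq_Ioi hhl] at hanti
  exact hanti h₁_pos (h₁_pos.trans h₁₂) h₁₂
end

section
/- If v_l ≤ −2√(g h_l), then the discharge-form Lax curve lies strictly below the lower critical curve: φ̃_l(h) < −h·√(g h) for every h > 0 (in particular φ̃_l is strictly negative and never meets the critical curves C̃⁺ and C̃⁻). -/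
/-!
Divided by `h`, the claim is `φ_l(h) < -√(g h)`. On the rarefaction branch this is immediate:
`φ_l(h) ≤ -2√(g h)`. On the shock branch it amounts to
`√(g h) < 2√(g h_l) + (h - h_l) √(g (h + h_l) / (2 h h_l))`; squaring and dropping the
nonnegative cross term reduces it to a cubic inequality in `h, h_l`, positive as
`h ((h - 3h_l/2)² + 19h_l²/4) + h_l³`.
-/

open Real

lemma self_lt_four_mul_add_sq_mul_add_div {h hl : ℝ} (hh : 0 < h) (hhl : 0 < hl) :
    h < 4 * hl + (h - hl) ^ 2 * (h + hl) / (2 * h * hl) := by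
  rw [← sub_pos]
  have expand : 4 * hl + (h - hl) ^ 2 * (h + hl) / (2 * h * hl) - h =
      (h * ((h - 3 / 2 * hl) ^ 2 + 19 / 4 * hl ^ 2) + hl ^ 3) / (2 * h * hl) := by
    field_simp
    ring
  rw [expand]
  positivity

lemma sqrt_lt_two_sqrt_add_shock {g h hl : ℝ} (hg : 0 < g) (hhl : 0 < hl) (hle : hl ≤ h) :
    √(g * h) < 2 * √(g * hl) + (h - hl) * √(g * (h + hl) / (2 * h * hl)) := by
  have hh : 0 < h := hhl.trans_le hle
  set s := √(g * (h + hl) / (2 * h * hl))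
  have hs : 0 ≤ s := sqrt_nonneg _
  have hdh : 0 ≤ h - hl := sub_nonneg.mpr hle
  rw [sqrt_lt' (by positivity)]
  calc g * h < g * (4 * hl + (h - hl) ^ 2 * (h + hl) / (2 * h * hl)) :=
        mul_lt_mul_of_pos_left (self_lt_four_mul_add_sq_mul_add_div hh hhl) hg
    _ = 2 ^ 2 * √(g * hl) ^ 2 + (h - hl) ^ 2 * s ^ 2 := by
        rw [sq_sqrt (by positivity), sq_sqrt (by positivity)]
        ring
    _ ≤ (2 * √(g * hl) + (h - hl) * s) ^ 2 := by
        nlinarith [mul_nonneg (mul_nonneg (sqrt_nonneg (g * hl)) hdh) hs]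

lemma phil_lt_neg_sqrt {g hl vl h : ℝ} (hg : 0 < g) (hhl : 0 < hl)
    (hvl : vl ≤ -2 * √(g * hl)) (hh : 0 < h) :
    phil g hl vl h < -√(g * h) := by
  have ha : 0 < √(g * h) := sqrt_pos.mpr (by positivity)
  unfold phil
  split_ifs with hle
  · linarith
  · linarith [sqrt_lt_two_sqrt_add_shock hg hhl (le_of_not_ge hle)]

/-- If `v_l ≤ −2√(g h_l)`, the discharge-form Lax curve lies strictly below the
lower critical curve `C̃⁻(h) = −h√(g h)` for every `h > 0`. -/
theorem philTilde_below_lower_critical (g hl vl : ℝ) (hg : 0 < g) (hhl : 0 < hl)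
    (hvl : vl ≤ -2 * Real.sqrt (g * hl)) :
    ∀ h : ℝ, 0 < h → philTilde g hl vl h < -(h * Real.sqrt (g * h)) := by
  intro h hh
  rw [philTilde, ← mul_neg]
  exact mul_lt_mul_of_pos_left (phil_lt_neg_sqrt hg hhl hvl hh) hh
end

section
/- If −2√(g h_l) < v_l ≤ √(g h_l), then the point h⁺ := (v_l + 2√(g h_l))²/(9g) satisfies 0 < h⁺ ≤ h_l, the value of the discharge-form Lax curve there lies on the upper critical curve, φ̃_l(h⁺) = h⁺·√(g h⁺), and h⁺ is the unique global maximum point of φ̃_l on (0,∞): φ̃_l(h) < φ̃_l(h⁺) for every h > 0 with h ≠ h⁺. -/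
open Real

lemma mul_sq_sub_two_mul_cube_lt {s x : ℝ} (hs : 0 < s) (hx : 0 ≤ x) (hne : x ≠ s / 3) :
    s * x ^ 2 - 2 * x ^ 3 < s ^ 3 / 27 := by
  have hfactor : s ^ 3 / 27 - (s * x ^ 2 - 2 * x ^ 3) = (x - s / 3) ^ 2 * (2 * x + s / 3) := by
    ring
  have : 0 < (x - s / 3) ^ 2 * (2 * x + s / 3) :=
    mul_pos (sq_pos_of_ne_zero (sub_ne_zero.2 hne)) (by linarith)
  linarith

lemma mul_sub_two_sqrt_mul_lt {g s h : ℝ} (hg : 0 < g) (hs : 0 < s) (hh : 0 ≤ h)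
    (hne : h ≠ s ^ 2 / (9 * g)) :
    h * (s - 2 * √(g * h)) < s ^ 2 / (9 * g) * (s / 3) := by
  set x := √(g * h)
  have hx2 : x ^ 2 = g * h := sq_sqrt (by positivity)
  have hxne : x ≠ s / 3 := by
    intro hx
    refine hne ((eq_div_iff (by positivity)).2 ?_)
    linear_combination -9 * hx2 + 9 * (x + s / 3) * hx
  rw [← mul_lt_mul_iff_right₀ hg]
  calc g * (h * (s - 2 * x)) = s * x ^ 2 - 2 * x ^ 3 := by linear_combination (2 * x - s) * hx2
    _ < s ^ 3 / 27 := mul_sq_sub_two_mul_cube_lt hs (sqrt_nonneg _) hxne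
    _ = g * (s ^ 2 / (9 * g) * (s / 3)) := by field_simp; ring

lemma two_mul_sqrt_sub_sqrt_le_shock {g hl h : ℝ} (hg : 0 < g) (hhl : 0 < hl) (hlh : hl ≤ h) :
    2 * (√(g * h) - √(g * hl)) ≤ (h - hl) * √(g * (h + hl) / (2 * h * hl)) := by
  obtain ⟨x, hx0, rfl⟩ : ∃ x, 0 < x ∧ h = x ^ 2 / g :=
    ⟨√(g * h), sqrt_pos.2 (by nlinarith), by rw [sq_sqrt (by nlinarith)]; field_simp⟩
  obtain ⟨c, hc0, rfl⟩ : ∃ c, 0 < c ∧ hl = c ^ 2 / g :=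
    ⟨√(g * hl), sqrt_pos.2 (by positivity), by rw [sq_sqrt (by positivity)]; field_simp⟩
  have hsqrt {y : ℝ} (hy : 0 ≤ y) : √(g * (y ^ 2 / g)) = y := by
    rw [mul_div_cancel₀ _ hg.ne', sqrt_sq hy]
  rw [hsqrt hx0.le, hsqrt hc0.le, ← sqrt_sq (sub_nonneg.2 hlh), ← sqrt_mul (sq_nonneg _)]
  apply le_sqrt_of_sq_le
  have hfactor : (x ^ 2 - c ^ 2) ^ 2 * (x ^ 2 + c ^ 2) - 8 * x ^ 2 * c ^ 2 * (x - c) ^ 2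
      = (x - c) ^ 4 * (x ^ 2 + 4 * x * c + c ^ 2) := by ring
  have : 0 ≤ (x - c) ^ 4 * (x ^ 2 + 4 * x * c + c ^ 2) := by positivity
  field_simp
  linarith

lemma phil_le_rarefaction {g hl vl h : ℝ} (hg : 0 < g) (hhl : 0 < hl) :
    phil g hl vl h ≤ vl + 2 * √(g * hl) - 2 * √(g * h) := by
  unfold phil
  split_ifs with hle
  · exact le_rfl
  · linarith [two_mul_sqrt_sub_sqrt_le_shock hg hhl (not_le.1 hle).le]

/-- If `−2√(g h_l) < v_l ≤ √(g h_l)`, then `h⁺ = (v_l + 2√(g h_l))²/(9g)`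
lies in `(0, h_l]`, the discharge-form Lax curve meets the upper critical curve
there, and `h⁺` is the unique global maximum point of `φ̃_l` on `(0, ∞)`. -/
theorem philTilde_max_at_critical (g hl vl : ℝ) (hg : 0 < g) (hhl : 0 < hl)
    (hv₁ : -2 * Real.sqrt (g * hl) < vl) (hv₂ : vl ≤ Real.sqrt (g * hl)) :
    0 < (vl + 2 * Real.sqrt (g * hl)) ^ 2 / (9 * g) ∧
    (vl + 2 * Real.sqrt (g * hl)) ^ 2 / (9 * g) ≤ hl ∧
    philTilde g hl vl ((vl + 2 * Real.sqrt (g * hl)) ^ 2 / (9 * g)) =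
      ((vl + 2 * Real.sqrt (g * hl)) ^ 2 / (9 * g)) *
        Real.sqrt (g * ((vl + 2 * Real.sqrt (g * hl)) ^ 2 / (9 * g))) ∧
    ∀ h : ℝ, 0 < h → h ≠ (vl + 2 * Real.sqrt (g * hl)) ^ 2 / (9 * g) →
      philTilde g hl vl h <
        philTilde g hl vl ((vl + 2 * Real.sqrt (g * hl)) ^ 2 / (9 * g)) := by
  set c := √(g * hl)
  set s := vl + 2 * c
  have hs : 0 < s := by linarith
  have hsqrt : √(g * (s ^ 2 / (9 * g))) = s / 3 := by
    rw [show g * (s ^ 2 / (9 * g)) = (s / 3) ^ 2 by field_simp; ring, sqrt_sq (by positivity)]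
  have hle : s ^ 2 / (9 * g) ≤ hl := by
    rw [div_le_iff₀ (by positivity)]
    calc s ^ 2 ≤ (3 * c) ^ 2 := pow_le_pow_left₀ hs.le (by linarith) 2
      _ = hl * (9 * g) := by rw [mul_pow, sq_sqrt (by positivity)]; ring
  have hval : philTilde g hl vl (s ^ 2 / (9 * g)) = s ^ 2 / (9 * g) * (s / 3) := by
    rw [philTilde, phil, if_pos hle, hsqrt]
    ring
  refine ⟨by positivity, hle, by rw [hval, hsqrt], fun h hh hne => ?_⟩
  rw [hval]
  calc philTilde g hl vl h ≤ h * (s - 2 * √(g * h)) :=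
        mul_le_mul_of_nonneg_left (phil_le_rarefaction hg hhl) hh.le
    _ < s ^ 2 / (9 * g) * (s / 3) := mul_sub_two_sqrt_mul_lt hg hs hh.le hne
end

section
/- If −√(g h_l) < v_l ≤ √(g h_l), then the shock part of the Lax curve meets the lower critical curve: there exists h ≥ h_l such that v_l − (h − h_l)·√(g (h + h_l)/(2 h h_l)) + √(g h) = 0. -/
/-!
At `h = h_l` the shock term vanishes, so the left-hand side is `v_l + √(g h_l) > 0`. At `h = 9 h_l`
it is `v_l + 3√(g h_l) - (8√5/3)√(g h_l) ≤ v_l - √(g h_l) ≤ 0`, since `8√5/3 ≥ 4`. The intermediate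
value theorem on `[h_l, 9 h_l]` gives the root.
-/

open Real Set

noncomputable def laxShock (g hl vl h : ℝ) : ℝ :=
  vl - (h - hl) * √(g * (h + hl) / (2 * h * hl))

theorem laxShock_self (g hl vl : ℝ) : laxShock g hl vl hl = vl := by
  simp [laxShock]

theorem continuousOn_laxShock (g vl : ℝ) {hl : ℝ} (hhl : hl ≠ 0) :
    ContinuousOn (laxShock g hl vl) {0}ᶜ := by
  unfold laxShock
  fun_prop (disch := intro h hh; exact mul_ne_zero (mul_ne_zero two_ne_zero hh) hhl)

theorem laxShock_nine_mul_le {g hl : ℝ} (vl : ℝ) (hg : 0 ≤ g) (hhl : 0 < hl) :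
    laxShock g hl vl (9 * hl) ≤ vl - 4 * √(g * hl) := by
  have key : 4 * √(g * hl) ≤ (9 * hl - hl) * √(g * (9 * hl + hl) / (2 * (9 * hl) * hl)) := by
    have lhs : 4 * √(g * hl) = √(16 * (g * hl)) := by
      rw [show (16 : ℝ) = 4 ^ 2 by norm_num, sqrt_mul (by norm_num : (0 : ℝ) ≤ 4 ^ 2),
        sqrt_sq (by norm_num)]
    have rhs : (9 * hl - hl) * √(g * (9 * hl + hl) / (2 * (9 * hl) * hl)) =
        √(320 / 9 * (g * hl)) := by
      rw [← sqrt_sq (show 0 ≤ 9 * hl - hl by linarith), ← sqrt_mul (by positivity)]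
      congr 1
      field_simp
      ring
    rw [lhs, rhs]
    exact sqrt_le_sqrt (by nlinarith [mul_nonneg hg hhl.le])
  unfold laxShock
  linarith

theorem sqrt_mul_nine_mul (g hl : ℝ) : √(g * (9 * hl)) = 3 * √(g * hl) := by
  rw [mul_left_comm, show (9 : ℝ) = 3 ^ 2 by norm_num, sqrt_mul (by norm_num : (0 : ℝ) ≤ 3 ^ 2),
    sqrt_sq (by norm_num)]

/-- If `−√(g h_l) < v_l ≤ √(g h_l)`, the shock part of the Lax curve meets the
lower critical curve `C⁻(h) = −√(g h)`: there is `h ≥ h_l` with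
`S₁(h_l, v_l; h) + √(g h) = 0`. -/
theorem shock_meets_lower_critical (g hl vl : ℝ) (hg : 0 < g) (hhl : 0 < hl)
    (hv₁ : -Real.sqrt (g * hl) < vl) (hv₂ : vl ≤ Real.sqrt (g * hl)) :
    ∃ h : ℝ, h ≥ hl ∧
      vl - (h - hl) * Real.sqrt (g * (h + hl) / (2 * h * hl)) + Real.sqrt (g * h) = 0 := by
  let f : ℝ → ℝ := fun h => laxShock g hl vl h + √(g * h)
  have hcont : ContinuousOn f (Icc hl (9 * hl)) :=
    ((continuousOn_laxShock g vl hhl.ne').add (by fun_prop)).mono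
      fun h hh => ne_of_gt (hhl.trans_le hh.1)
  have hleft : 0 ≤ f hl := by
    simp only [f, laxShock_self]
    linarith
  have hright : f (9 * hl) ≤ 0 := by
    simp only [f, sqrt_mul_nine_mul]
    linarith [laxShock_nine_mul_le vl hg.le hhl]
  obtain ⟨h, hh, hfh⟩ := intermediate_value_Icc' (by linarith) hcont ⟨hright, hleft⟩
  exact ⟨h, hh.1, hfh⟩
end

section
/- Assume v_l ≥ √(g h_l), let F_l = v_l/√(g h_l) and h* = (h_l/2)(−1 + √(1 + 8 F_l²)). Then for h ≥ h_l, the equation h·(v_l − (h − h_l)·√(g (h + h_l)/(2 h h_l))) = h_l·v_l holds if and only if h = h_l or h = h*. -/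
/-!
Writing `s` for the square root, `h (v_l - (h - h_l) s) - h_l v_l = (h - h_l)(v_l - h s)`, so
apart from `h = h_l` the level set is `v_l = h s`. Squaring (both sides are positive) turns this
into `g h (h + h_l) = 2 h_l v_l²`, i.e. `t² + t = 2 F_l²` for the depth ratio `t = h / h_l`, whose
only nonnegative root is `t = (-1 + √(1 + 8 F_l²)) / 2`.
-/

open Real

lemma mul_sub_sub_mul_eq_mul_iff (a b v s : ℝ) :
    a * (v - (a - b) * s) = b * v ↔ a = b ∨ v = a * s := by
  have factor : a * (v - (a - b) * s) - b * v = (a - b) * (v - a * s) := by ring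
  rw [← sub_eq_zero, factor, mul_eq_zero, sub_eq_zero, sub_eq_zero]

lemma eq_mul_sqrt_iff {v a x : ℝ} (hv : 0 < v) (ha : 0 < a) :
    v = a * √x ↔ v ^ 2 = a ^ 2 * x := by
  rw [eq_comm, mul_comm, ← eq_div_iff ha.ne', sqrt_eq_iff_mul_self_eq_of_pos (div_pos hv ha)]
  field_simp

lemma sq_add_mul_eq_iff_eq_sqrt {x b c : ℝ} (hx : 0 < 2 * x + b) :
    x ^ 2 + b * x = c ↔ 2 * x + b = √(b ^ 2 + 4 * c) := by
  rw [@eq_comm _ (2 * x + b), sqrt_eq_iff_mul_self_eq_of_pos hx]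
  constructor <;> intro e <;> linarith

/-- For a supercritical-or-critical left state, the horizontal line `q = q_l`
meets the shock part of the discharge-form Lax curve exactly at `h = h_l` and
`h = h* = (h_l/2)(−1 + √(1 + 8 F_l²))`. -/
theorem shock_discharge_level_set (g hl vl : ℝ) (hg : 0 < g) (hhl : 0 < hl)
    (hvl : vl ≥ Real.sqrt (g * hl)) :
    ∀ h : ℝ, h ≥ hl →
      (h * (vl - (h - hl) * Real.sqrt (g * (h + hl) / (2 * h * hl))) = hl * vl ↔
        h = hl ∨
        h = hl / 2 * (-1 + Real.sqrt (1 + 8 * (vl / Real.sqrt (g * hl)) ^ 2))) := by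
  intro h hh
  have hh0 : 0 < h := hhl.trans_le hh
  have hvl0 : 0 < vl := (sqrt_pos.mpr (mul_pos hg hhl)).trans_le hvl
  have froude_sq : (vl / √(g * hl)) ^ 2 = vl ^ 2 / (g * hl) := by
    rw [div_pow, sq_sqrt (mul_pos hg hhl).le]
  rw [mul_sub_sub_mul_eq_mul_iff, eq_mul_sqrt_iff hvl0 hh0]
  refine or_congr_right ?_
  calc vl ^ 2 = h ^ 2 * (g * (h + hl) / (2 * h * hl))
      ↔ (h / hl) ^ 2 + 1 * (h / hl) = 2 * (vl / √(g * hl)) ^ 2 := by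
        rw [froude_sq]
        constructor <;> intro e <;> field_simp at e ⊢ <;> linarith
    _ ↔ 2 * (h / hl) + 1 = √(1 + 8 * (vl / √(g * hl)) ^ 2) := by
        rw [sq_add_mul_eq_iff_eq_sqrt (by positivity)]
        ring_nf
    _ ↔ h = hl / 2 * (-1 + √(1 + 8 * (vl / √(g * hl)) ^ 2)) := by
        constructor <;> intro e <;> field_simp at e ⊢ <;> linear_combination e
end

section
/- Assume v_l > √(g h_l) (supercritical left state), let F_l = v_l/√(g h_l), q_l = h_l·v_l and h* = (h_l/2)(−1 + √(1 + 8 F_l²)). Then h* > (q_l²/g)^{1/3}; equivalently 0 < q_l < h*·√(g h*), so the state (h*, q_l) is subcritical (its Froude number q_l/(h*√(g h*)) lies strictly between 0 and 1). -/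
/-!
With `F² = v_l² / (g h_l) > 1` and `r = √(1 + 8 F²) > 3` we have `h* = h_l (r - 1) / 2`, so
`h*³ / h_l³ = (r - 1)³ / 8` while `q_l² / (g h_l³) = F² = (r² - 1) / 8`. The claim `q_l² < g h*³`
is therefore `r² - 1 < (r - 1)³`, i.e. `r + 1 < (r - 1)²`, which is `r (r - 3) > 0`.
Both forms of the conclusion (cube root and Froude number) are rewritings of `q_l² < g h*³`.
-/

open Real

/-- The paper's `h*`: the sequent depth of a hydraulic jump with upstream state `(h, v)`
(Bélanger's equation). -/
noncomputable def conjugateDepth (g h v : ℝ) : ℝ :=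
  h / 2 * (-1 + √(1 + 8 * (v / √(g * h)) ^ 2))

lemma three_lt_sqrt_one_add_eight_mul {x : ℝ} (hx : 1 < x) : 3 < √(1 + 8 * x) :=
  (lt_sqrt (by norm_num)).2 (by linarith)

lemma sq_sub_one_lt_sub_one_pow_three {r : ℝ} (hr : 3 < r) : r ^ 2 - 1 < (r - 1) ^ 3 := by
  nlinarith [mul_pos (by linarith : (0 : ℝ) < r - 1) (mul_pos (by linarith : (0 : ℝ) < r)
    (by linarith : (0 : ℝ) < r - 3))]

lemma conjugateDepth_eq {g h : ℝ} (hgh : 0 < g * h) (v : ℝ) :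
    conjugateDepth g h v = h / 2 * (√(1 + 8 * (v ^ 2 / (g * h))) - 1) := by
  rw [conjugateDepth, div_pow, sq_sqrt hgh.le]
  ring

section Supercritical

variable {g h v : ℝ}

lemma three_lt_sqrt_one_add_eight_froude_sq (hg : 0 < g) (hh : 0 < h) (hv : g * h < v ^ 2) :
    3 < √(1 + 8 * (v ^ 2 / (g * h))) :=
  three_lt_sqrt_one_add_eight_mul ((one_lt_div (mul_pos hg hh)).2 hv)

lemma conjugateDepth_pos (hg : 0 < g) (hh : 0 < h) (hv : g * h < v ^ 2) :
    0 < conjugateDepth g h v := by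
  rw [conjugateDepth_eq (mul_pos hg hh)]
  have := three_lt_sqrt_one_add_eight_froude_sq hg hh hv
  nlinarith

lemma div_lt_conjugateDepth_pow_three (hg : 0 < g) (hh : 0 < h) (hv : g * h < v ^ 2) :
    (h * v) ^ 2 / g < conjugateDepth g h v ^ 3 := by
  have hgh : 0 < g * h := mul_pos hg hh
  set F2 := v ^ 2 / (g * h) with hF2
  set r := √(1 + 8 * F2)
  have hr_sq : r ^ 2 = 1 + 8 * F2 := sq_sqrt (by positivity)
  have hcubic := sq_sub_one_lt_sub_one_pow_three (three_lt_sqrt_one_add_eight_froude_sq hg hh hv)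
  have hq : (h * v) ^ 2 / g = h ^ 3 * F2 := by
    rw [hF2]
    field_simp
  calc (h * v) ^ 2 / g = h ^ 3 * ((r ^ 2 - 1) / 8) := by rw [hq, hr_sq]; ring
    _ < h ^ 3 * ((r - 1) ^ 3 / 8) := by gcongr
    _ = conjugateDepth g h v ^ 3 := by rw [conjugateDepth_eq hgh]; ring

end Supercritical

lemma rpow_one_third_lt_of_lt_pow_three {x y : ℝ} (hx : 0 ≤ x) (hy : 0 ≤ y) (h : x < y ^ 3) :
    x ^ ((1 : ℝ) / 3) < y := by
  rw [one_div, rpow_inv_lt_iff_of_pos hx hy (by norm_num)]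
  exact_mod_cast h

lemma lt_mul_sqrt_mul_of_sq_lt {q g H : ℝ} (hH : 0 < H) (h : q ^ 2 < g * H ^ 3) :
    q < H * √(g * H) := by
  have hsqrt : H * √(g * H) = √(g * H ^ 3) := by
    rw [show g * H ^ 3 = H ^ 2 * (g * H) by ring, sqrt_mul (sq_nonneg H), sqrt_sq hH.le]
  rw [hsqrt]
  exact lt_sqrt_of_sq_lt h

/-- For a supercritical left state `(h_l, v_l)` (`v_l > √(g h_l)`), the state
`(h*, q_l)` with `h* = (h_l/2)(−1 + √(1 + 8 F_l²))` and `q_l = h_l v_l` is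
subcritical: `h* > (q_l²/g)^{1/3}`, equivalently `0 < q_l < h*·√(g h*)`, i.e.
its Froude number lies strictly between `0` and `1`. -/
theorem hstar_subcritical (g hl vl : ℝ) (hg : 0 < g) (hhl : 0 < hl)
    (hvl : vl > Real.sqrt (g * hl)) :
    hl / 2 * (-1 + Real.sqrt (1 + 8 * (vl / Real.sqrt (g * hl)) ^ 2)) >
      ((hl * vl) ^ 2 / g) ^ ((1 : ℝ) / 3) ∧
    0 < hl * vl /
        (hl / 2 * (-1 + Real.sqrt (1 + 8 * (vl / Real.sqrt (g * hl)) ^ 2)) *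
          Real.sqrt (g * (hl / 2 * (-1 + Real.sqrt (1 + 8 * (vl / Real.sqrt (g * hl)) ^ 2))))) ∧
    hl * vl /
        (hl / 2 * (-1 + Real.sqrt (1 + 8 * (vl / Real.sqrt (g * hl)) ^ 2)) *
          Real.sqrt (g * (hl / 2 * (-1 + Real.sqrt (1 + 8 * (vl / Real.sqrt (g * hl)) ^ 2))))) <
      1 := by
  change conjugateDepth g hl vl > _ ∧ 0 < hl * vl / (conjugateDepth g hl vl *
    √(g * conjugateDepth g hl vl)) ∧ hl * vl / (conjugateDepth g hl vl *
    √(g * conjugateDepth g hl vl)) < 1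
  set H := conjugateDepth g hl vl
  have hvl_pos : 0 < vl := (sqrt_nonneg _).trans_lt hvl
  have hsuper : g * hl < vl ^ 2 := by
    rw [← sq_sqrt (mul_pos hg hhl).le]
    exact pow_lt_pow_left₀ hvl (sqrt_nonneg _) two_ne_zero
  have hH : 0 < H := conjugateDepth_pos hg hhl hsuper
  have hcube := div_lt_conjugateDepth_pow_three hg hhl hsuper
  have hq2 : (hl * vl) ^ 2 < g * H ^ 3 := by rwa [div_lt_iff₀' hg] at hcube
  have hdenom : 0 < H * √(g * H) := mul_pos hH (sqrt_pos.2 (mul_pos hg hH))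
  refine ⟨rpow_one_third_lt_of_lt_pow_three (by positivity) hH.le hcube,
    div_pos (mul_pos hhl hvl_pos) hdenom, ?_⟩
  rw [div_lt_one hdenom]
  exact lt_mul_sqrt_mul_of_sq_lt hH hq2
end

section
/- If −√(g h_r) < v_r < √(g h_r), then the shock part of the inverse Lax curve meets the upper critical curve: there exists h ≥ h_r such that v_r + (h − h_r)·√(g (h + h_r)/(2 h h_r)) = √(g h). -/
/-!
Measure depths in units of `h_r` and velocities in units of `c = √(g h_r)`. At `h = k h_r` the
equation becomes `v_r / c = -φ k` with `φ k = (k - 1) √((k + 1) / (2k)) - √k`. Since `φ 1 = -1`,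
`φ 9 ≥ 1` and `|v_r / c| < 1`, the intermediate value theorem on `[1, 9]` gives the root.
-/

open Real Set

/-- `(S (k h_r) - v_r - C⁺ (k h_r)) / √(g h_r)`, where `S` is the shock curve. -/
noncomputable def shockCriticalGap (k : ℝ) : ℝ :=
  (k - 1) * √((k + 1) / (2 * k)) - √k

lemma continuousOn_shockCriticalGap : ContinuousOn shockCriticalGap (Ioi 0) := by
  unfold shockCriticalGap
  refine ContinuousOn.sub ?_ continuous_sqrt.continuousOn
  refine (continuousOn_id.sub continuousOn_const).mul (ContinuousOn.sqrt ?_)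
  exact (continuousOn_id.add continuousOn_const).div (continuousOn_const.mul continuousOn_id)
    fun k hk => by simp only [mem_Ioi] at hk; positivity

lemma shockCriticalGap_one : shockCriticalGap 1 = -1 := by
  simp [shockCriticalGap]

lemma one_le_shockCriticalGap_nine : 1 ≤ shockCriticalGap 9 := by
  have h3 : √(9 : ℝ) = 3 := by
    rw [show (9 : ℝ) = 3 ^ 2 by norm_num, sqrt_sq (by norm_num)]
  have half_le : 1 / 2 ≤ √((9 + 1) / (2 * 9) : ℝ) :=
    le_sqrt_of_sq_le (by norm_num)
  unfold shockCriticalGap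
  rw [h3]
  linarith

lemma shock_term_eq_scaled (g : ℝ) {hr k : ℝ} (hhr : 0 < hr) (hk : 0 < k) :
    (k * hr - hr) * √(g * (k * hr + hr) / (2 * (k * hr) * hr)) =
      (k - 1) * √((k + 1) / (2 * k)) * √(g * hr) := by
  have hr_mul_sqrt : hr * √(g / hr) = √(g * hr) := by
    rw [← sqrt_sq hhr.le, ← sqrt_mul (sq_nonneg hr), sqrt_sq hhr.le]
    congr 1
    field_simp
  rw [← hr_mul_sqrt, show g * (k * hr + hr) / (2 * (k * hr) * hr) = (k + 1) / (2 * k) * (g / hr) by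
      field_simp, sqrt_mul (by positivity)]
  ring

theorem inverse_shock_meets_upper_critical_general (g hr vr : ℝ) (hhr : 0 < hr)
    (hv₁ : -Real.sqrt (g * hr) < vr) (hv₂ : vr < Real.sqrt (g * hr)) :
    ∃ h : ℝ, h ≥ hr ∧
      vr + (h - hr) * Real.sqrt (g * (h + hr) / (2 * h * hr)) = Real.sqrt (g * h) := by
  set c := √(g * hr)
  have hc : 0 < c := by linarith
  have hlower : shockCriticalGap 1 ≤ -(vr / c) := by
    rw [shockCriticalGap_one, neg_le_neg_iff]
    exact ((div_lt_one hc).2 hv₂).le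
  have hupper : -(vr / c) ≤ shockCriticalGap 9 := by
    refine le_trans ?_ one_le_shockCriticalGap_nine
    rw [neg_le, le_div_iff₀ hc]
    linarith
  obtain ⟨k, ⟨hk₁, -⟩, hgap⟩ := intermediate_value_Icc (by norm_num)
    (continuousOn_shockCriticalGap.mono fun k hk => lt_of_lt_of_le one_pos hk.1) ⟨hlower, hupper⟩
  have hshock : (k - 1) * √((k + 1) / (2 * k)) = √k - vr / c := by
    unfold shockCriticalGap at hgap
    linarith
  have hcritical : √(g * (k * hr)) = √k * c := by
    rw [show g * (k * hr) = k * (g * hr) by ring, sqrt_mul (by linarith)]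
  refine ⟨k * hr, le_mul_of_one_le_left hhr.le hk₁, ?_⟩
  rw [shock_term_eq_scaled g hhr (by linarith), hshock, hcritical]
  field_simp
  ring

/-- If `−√(g h_r) < v_r < √(g h_r)`, the shock part of the inverse Lax curve meets
the upper critical curve `C⁺(h) = √(g h)`: there is `h ≥ h_r` with
`S₂⁻¹(h_r, v_r; h) = √(g h)`. -/
theorem inverse_shock_meets_upper_critical (g hr vr : ℝ) (hg : 0 < g) (hhr : 0 < hr)
    (hv₁ : -Real.sqrt (g * hr) < vr) (hv₂ : vr < Real.sqrt (g * hr)) :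
    ∃ h : ℝ, h ≥ hr ∧
      vr + (h - hr) * Real.sqrt (g * (h + hr) / (2 * h * hr)) = Real.sqrt (g * h) :=
  inverse_shock_meets_upper_critical_general g hr vr hhr hv₁ hv₂
end

section
/- If v_l + 2√(g h_l) > v_r − 2√(g h_r), then there exists exactly one h > 0 such that φ_l(h) = φ_r(h); i.e., the Riemann problem for the shallow water equations with left state (h_l, v_l) and right state (h_r, v_r) has a unique middle state. -/
/-!
Write `φ_r(h) = -φ_l'(h)`, where `φ_l'` is the Lax curve through `(h_r, -v_r)`, so the middle
states are the positive zeros of `F = φ_l + φ_l'`. Every Lax curve is continuous and strictly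
decreasing on `[0, ∞)`: on the shock branch this follows from writing the shock term as
`√(g / (2 h_l) · (h - h_l) (h - h_l² / h))`, a product of two nonnegative increasing factors.
It also tends to `-∞`, since the shock term grows at least like `√(g / (2 h_l)) (h - h_l)`.
Hence `F` is continuous, strictly decreasing, `F 0 = v_l + 2√(g h_l) - v_r + 2√(g h_r) > 0` and
`F → -∞`, so `F` has exactly one positive zero.
-/

open Set Filter

/-- Inverse Lax curve through the right state `(hr, vr)`. -/
noncomputable def phir (g hr vr h : ℝ) : ℝ :=
  if h ≤ hr then vr - 2 * Real.sqrt (g * hr) + 2 * Real.sqrt (g * h)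
  else vr + (h - hr) * Real.sqrt (g * (h + hr) / (2 * h * hr))

theorem existsUnique_pos_eq_zero_of_strictAntiOn {F : ℝ → ℝ} (hcont : ContinuousOn F (Ici 0))
    (hanti : StrictAntiOn F (Ioi 0)) (hF0 : 0 < F 0) (htop : Tendsto F atTop atBot) :
    ∃! x, 0 < x ∧ F x = 0 := by
  obtain ⟨b, hb0, hFb⟩ := ((eventually_ge_atTop 0).and (htop.eventually_lt_atBot 0)).exists
  obtain ⟨x, hx, hFx⟩ :=
    intermediate_value_Icc' hb0 (hcont.mono Icc_subset_Ici_self) ⟨hFb.le, hF0.le⟩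
  have hx0 : 0 < x := hx.1.lt_of_ne fun h => hF0.ne' (h ▸ hFx)
  exact ⟨x, ⟨hx0, hFx⟩, fun y ⟨hy0, hFy⟩ => hanti.injOn hy0 hx0 (hFy.trans hFx.symm)⟩

theorem phir_eq_neg_phil (g hr vr h : ℝ) : phir g hr vr h = -phil g hr (-vr) h := by
  unfold phil phir
  split <;> ring

theorem phil_zero (g vl : ℝ) {hl : ℝ} (hhl : 0 ≤ hl) :
    phil g hl vl 0 = vl + 2 * Real.sqrt (g * hl) := by
  simp [phil, hhl]

section Shock

variable {g hl h : ℝ}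

theorem shock_term_eq_sqrt (hhl : 0 < hl) (h_ge : hl ≤ h) :
    (h - hl) * Real.sqrt (g * (h + hl) / (2 * h * hl)) =
      Real.sqrt (g / (2 * hl) * ((h - hl) * (h - hl ^ 2 / h))) := by
  have hh : 0 < h := hhl.trans_le h_ge
  rw [show g / (2 * hl) * ((h - hl) * (h - hl ^ 2 / h)) =
      (h - hl) ^ 2 * (g * (h + hl) / (2 * h * hl)) by field_simp; ring,
    Real.sqrt_mul (sq_nonneg _), Real.sqrt_sq (sub_nonneg.2 h_ge)]

theorem shock_term_strictMonoOn (hg : 0 < g) (hhl : 0 < hl) :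
    StrictMonoOn (fun h => (h - hl) * Real.sqrt (g * (h + hl) / (2 * h * hl))) (Ici hl) := by
  intro a (ha : hl ≤ a) b (hb : hl ≤ b) hab
  have ha0 : 0 < a := hhl.trans_le ha
  simp only [shock_term_eq_sqrt hhl ha, shock_term_eq_sqrt hhl hb]
  have hdiv : hl ^ 2 / b < hl ^ 2 / a := div_lt_div_of_pos_left (by positivity) ha0 hab
  have hfac : 0 ≤ a - hl ^ 2 / a := by
    rw [sub_nonneg, div_le_iff₀ ha0]
    nlinarith
  refine Real.sqrt_lt_sqrt (by positivity) (mul_lt_mul_of_pos_left ?_ (by positivity))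
  exact mul_lt_mul'' (by linarith) (by linarith) (by linarith) hfac

theorem sqrt_le_shock_term (hg : 0 ≤ g) (hhl : 0 < hl) (h_ge : hl ≤ h) :
    (h - hl) * Real.sqrt (g / (2 * hl)) ≤ (h - hl) * Real.sqrt (g * (h + hl) / (2 * h * hl)) := by
  have hh : 0 < h := hhl.trans_le h_ge
  refine mul_le_mul_of_nonneg_left (Real.sqrt_le_sqrt ?_) (sub_nonneg.2 h_ge)
  rw [div_le_div_iff₀ (by positivity) (by positivity)]
  nlinarith [mul_nonneg hg (mul_nonneg hhl.le hhl.le)]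

end Shock

section LaxCurve

variable {g hl : ℝ} (vl : ℝ)

theorem phil_strictAntiOn (hg : 0 < g) (hhl : 0 < hl) : StrictAntiOn (phil g hl vl) (Ici 0) := by
  have hrare : StrictAntiOn (phil g hl vl) (Icc 0 hl) := by
    refine StrictAntiOn.congr
      (f₁ := fun h => vl + 2 * Real.sqrt (g * hl) - 2 * Real.sqrt (g * h)) ?_
      fun h hh => (if_pos hh.2).symm
    intro a ha b hb hab
    have := Real.sqrt_lt_sqrt (mul_nonneg hg.le ha.1) (mul_lt_mul_of_pos_left hab hg)
    simp only
    linarith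
  have hshock : StrictAntiOn (phil g hl vl) (Ici hl) := by
    refine StrictAntiOn.congr
      (f₁ := fun h => vl - (h - hl) * Real.sqrt (g * (h + hl) / (2 * h * hl))) ?_
      fun h (hh : hl ≤ h) => ?_
    · intro a ha b hb hab
      have := shock_term_strictMonoOn hg hhl ha hb hab
      simp only at this ⊢
      linarith
    · rcases hh.eq_or_lt with rfl | hlt
      · simp [phil]
      · simp [phil, not_le.2 hlt]
  rw [← Icc_union_Ici_eq_Ici hhl.le]
  exact hrare.union hshock (isGreatest_Icc hhl.le) isLeast_Ici

theorem phil_continuous (hhl : 0 < hl) : Continuous (phil g hl vl) := by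
  refine continuous_if_le continuous_id continuous_const (by fun_prop) ?_ ?_
  · refine continuousOn_const.sub (continuousOn_id.sub continuousOn_const |>.mul ?_)
    refine Real.continuous_sqrt.comp_continuousOn (ContinuousOn.div (by fun_prop) (by fun_prop) ?_)
    intro x (hx : hl ≤ x)
    have := hhl.trans_le hx
    positivity
  · rintro x (rfl : x = hl)
    simp

theorem tendsto_phil_atTop (hg : 0 < g) (hhl : 0 < hl) : Tendsto (phil g hl vl) atTop atBot := by
  set c := Real.sqrt (g / (2 * hl))
  have hc : 0 < c := Real.sqrt_pos.2 (by positivity)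
  have hlin : Tendsto (fun h => vl + c * hl + -(c * h)) atTop atBot :=
    tendsto_atBot_add_const_left _ _
      (tendsto_neg_atTop_atBot.comp (tendsto_id.const_mul_atTop hc))
  refine tendsto_atBot_mono' _ ((eventually_gt_atTop hl).mono fun h hh => ?_) hlin
  have := sqrt_le_shock_term hg.le hhl hh.le
  simp only [phil, if_neg (not_le.2 hh)]
  linarith

end LaxCurve

/-- If `v_l + 2√(g h_l) > v_r − 2√(g h_r)`, the Lax curves `φ_l` and `φ_r` have a
unique intersection on `(0, ∞)`: the Riemann problem has a unique middle state. -/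
theorem unique_middle_state (g hl vl hr vr : ℝ) (hg : 0 < g) (hhl : 0 < hl) (hhr : 0 < hr)
    (hcond : vl + 2 * Real.sqrt (g * hl) > vr - 2 * Real.sqrt (g * hr)) :
    ∃! h : ℝ, 0 < h ∧ phil g hl vl h = phir g hr vr h := by
  have key := existsUnique_pos_eq_zero_of_strictAntiOn (F := phil g hl vl + phil g hr (-vr))
    ((phil_continuous vl hhl).add (phil_continuous (-vr) hhr)).continuousOn
    (((phil_strictAntiOn vl hg hhl).add (phil_strictAntiOn (-vr) hg hhr)).mono
      Ioi_subset_Ici_self)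
    (by simp only [Pi.add_apply, phil_zero _ _ hhl.le, phil_zero _ _ hhr.le]; linarith)
    ((tendsto_phil_atTop vl hg hhl).atBot_add_atBot (tendsto_phil_atTop (-vr) hg hhr))
  simpa only [Pi.add_apply, phir_eq_neg_phil, eq_neg_iff_add_eq_zero] using key
end

section
/- Let (h_m, v_m) be a middle state with h_m > 0 and −√(g h_m) ≤ v_m < 0, and let 0 < h < h_m. Put q_m = h_m·v_m and q = h·(v_m − (h_m − h)·√(g (h + h_m)/(2 h h_m))) (the point on the 2-shock curve through (h_m,v_m)). Then the Rankine–Hugoniot shock speed λ = (q_m − q)/(h_m − h) satisfies λ ≤ 0 if and only if h ≤ (h_m/2)(−1 + √(1 + 8 v_m²/(g h_m))). -/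
/-! The shock speed simplifies to `λ = v_m + √(g h (h + h_m) / (2 h_m))`, so for `v_m < 0`
we have `λ ≤ 0` iff `g h (h + h_m) ≤ 2 h_m v_m²`. This is a quadratic inequality in `h`
whose positive root is the conjugate depth `(h_m/2)(−1 + √(1 + 8 F_m²))` of a hydraulic jump. -/

lemma shock_speed_eq_add_mul {hm vm h : ℝ} (hne : hm - h ≠ 0) (s : ℝ) :
    (hm * vm - h * (vm - (hm - h) * s)) / (hm - h) = vm + h * s := by
  field_simp
  ring

lemma mul_sqrt_two_shock {g hm h : ℝ} (hh : 0 < h) :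
    h * Real.sqrt (g * (h + hm) / (2 * h * hm)) = Real.sqrt (g * h * (h + hm) / (2 * hm)) := by
  calc h * Real.sqrt (g * (h + hm) / (2 * h * hm))
      = Real.sqrt (h ^ 2) * Real.sqrt (g * (h + hm) / (2 * h * hm)) := by
        rw [Real.sqrt_sq hh.le]
    _ = Real.sqrt (h ^ 2 * (g * (h + hm) / (2 * h * hm))) :=
        (Real.sqrt_mul (sq_nonneg h) _).symm
    _ = Real.sqrt (g * h * (h + hm) / (2 * hm)) := by
        congr 1
        field_simp

lemma add_sqrt_nonpos_iff {a x : ℝ} (ha : a ≤ 0) : a + Real.sqrt x ≤ 0 ↔ x ≤ a ^ 2 := by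
  rw [← le_neg_iff_add_nonpos_left, Real.sqrt_le_left (neg_nonneg.2 ha), neg_sq]

lemma le_conjugate_depth_iff {g hm vm h : ℝ} (hg : 0 < g) (hhm : 0 < hm) (hh : 0 ≤ h) :
    h ≤ hm / 2 * (-1 + Real.sqrt (1 + 8 * vm ^ 2 / (g * hm))) ↔
      g * h * (h + hm) / (2 * hm) ≤ vm ^ 2 := by
  have hdepth : h ≤ hm / 2 * (-1 + Real.sqrt (1 + 8 * vm ^ 2 / (g * hm))) ↔
      (2 * h + hm) / hm ≤ Real.sqrt (1 + 8 * vm ^ 2 / (g * hm)) := by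
    rw [div_le_iff₀ hhm]
    constructor <;> intro <;> linarith
  have hsq : ((2 * h + hm) / hm) ^ 2 = 1 + 8 * (g * h * (h + hm) / (2 * hm)) / (g * hm) := by
    field_simp
    ring
  rw [hdepth, Real.le_sqrt (by positivity) (by positivity), hsq, add_le_add_iff_left,
    div_le_div_iff_of_pos_right (by positivity), mul_le_mul_iff_right₀ (by norm_num)]

theorem two_shock_nonpositive_speed_iff_general (g hm vm h : ℝ) (hg : 0 < g) (hhm : 0 < hm)
    (hv₂ : vm < 0) (hh₁ : 0 < h) (hh₂ : h < hm) :
    (hm * vm - h * (vm - (hm - h) * Real.sqrt (g * (h + hm) / (2 * h * hm)))) / (hm - h)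
        ≤ 0 ↔
      h ≤ hm / 2 * (-1 + Real.sqrt (1 + 8 * vm ^ 2 / (g * hm))) := by
  rw [shock_speed_eq_add_mul (sub_ne_zero.2 hh₂.ne'), mul_sqrt_two_shock hh₁,
    add_sqrt_nonpos_iff hv₂.le, le_conjugate_depth_iff hg hhm hh₁.le]

/-- The Rankine–Hugoniot speed of the `2`-shock joining `(h, S₂(h_m, v_m; h))` to the
middle state `(h_m, v_m)` (with `−√(g h_m) ≤ v_m < 0` and `0 < h < h_m`) is
non-positive if and only if `h ≤ (h_m/2)(−1 + √(1 + 8 F_m²))`. -/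
theorem two_shock_nonpositive_speed_iff (g hm vm h : ℝ) (hg : 0 < g) (hhm : 0 < hm)
    (hv₁ : -Real.sqrt (g * hm) ≤ vm) (hv₂ : vm < 0) (hh₁ : 0 < h) (hh₂ : h < hm) :
    (hm * vm - h * (vm - (hm - h) * Real.sqrt (g * (h + hm) / (2 * h * hm)))) / (hm - h)
        ≤ 0 ↔
      h ≤ hm / 2 * (-1 + Real.sqrt (1 + 8 * vm ^ 2 / (g * hm))) :=
  two_shock_nonpositive_speed_iff_general g hm vm h hg hhm hv₂ hh₁ hh₂
end

section
/- Let h₁, h₂ > 0 and v₁, v₂ ∈ ℝ with v₁ ≠ 0, and assume conservation of mass h₁·v₁ = h₂·v₂ and equality of specific energy v₁²/2 + g·h₁ = v₂²/2 + g·h₂. Then either h₁ = h₂, or h₂/h₁ = (F₁²/4)·(1 + √(1 + 8/F₁²)), where F₁² = v₁²/(g h₁). -/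
/-!
Eliminating `v₂ = h₁ v₁ / h₂` from the energy equation leaves
`(h₂ - h₁) (v₁² (h₁ + h₂) - 2 g h₂²) = 0`. Off the diagonal, dividing the second factor by
`g h₁³` gives the quadratic `2 r² = F₁² (r + 1)` for `r = h₂ / h₁`, and the stated ratio is
its nonnegative root.
-/

theorem sub_mul_sub_eq_zero_of_mass_of_energy {g h₁ h₂ v₁ v₂ : ℝ}
    (hmass : h₁ * v₁ = h₂ * v₂)
    (henergy : v₁ ^ 2 / 2 + g * h₁ = v₂ ^ 2 / 2 + g * h₂) :
    (h₂ - h₁) * (v₁ ^ 2 * (h₁ + h₂) - 2 * g * h₂ ^ 2) = 0 := by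
  linear_combination 2 * h₂ ^ 2 * henergy - (h₂ * v₂ + h₁ * v₁) * hmass

theorem eq_of_two_mul_sq_eq_mul_add_one {F r : ℝ} (hF : 0 < F) (hr : 0 ≤ r)
    (h : 2 * r ^ 2 = F * (r + 1)) :
    r = F / 4 * (1 + √(1 + 8 / F)) := by
  have hroot : √(F ^ 2 + 8 * F) = 4 * r - F := by
    rw [Real.sqrt_eq_iff_mul_self_eq_of_pos] <;> nlinarith
  have hsqrt : √(1 + 8 / F) = √(F ^ 2 + 8 * F) / F := by
    rw [show 1 + 8 / F = (F ^ 2 + 8 * F) / F ^ 2 by field_simp, Real.sqrt_div' _ (sq_nonneg F),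
      Real.sqrt_sq hF.le]
  rw [hsqrt, hroot]
  field_simp
  ring

/-- At a junction with conservation of mass and equal specific energy, the two
heights either coincide or satisfy `h₂/h₁ = (F₁²/4)(1 + √(1 + 8/F₁²))`. -/
theorem equal_energy_height_ratio (g h₁ h₂ v₁ v₂ : ℝ) (hg : 0 < g)
    (hh₁ : 0 < h₁) (hh₂ : 0 < h₂) (hv₁ : v₁ ≠ 0)
    (hmass : h₁ * v₁ = h₂ * v₂)
    (henergy : v₁ ^ 2 / 2 + g * h₁ = v₂ ^ 2 / 2 + g * h₂) :
    h₁ = h₂ ∨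
      h₂ / h₁ = (v₁ ^ 2 / (g * h₁)) / 4 *
        (1 + Real.sqrt (1 + 8 / (v₁ ^ 2 / (g * h₁)))) := by
  rcases mul_eq_zero.mp (sub_mul_sub_eq_zero_of_mass_of_energy hmass henergy) with
    hsame | hconj
  · exact Or.inl (sub_eq_zero.mp hsame).symm
  have hquad : 2 * (h₂ / h₁) ^ 2 = v₁ ^ 2 / (g * h₁) * (h₂ / h₁ + 1) := by
    field_simp
    linear_combination -hconj
  exact Or.inr (eq_of_two_mul_sq_eq_mul_add_one (by positivity) (by positivity) hquad)
end

section
/- Let h₁, h₂ > 0 and q ∈ ℝ, and assume equality of momentum flux q²/h₁ + g·h₁²/2 = q²/h₂ + g·h₂²/2. Then either h₁ = h₂, or h₂/h₁ = (−1 + √(1 + 8 F₁²))/2, where F₁² = q²/(g h₁³). -/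
/-!
Off the diagonal `h₁ = h₂`, equal momentum flux is the conjugate-depth relation
`2 q² = g h₁ h₂ (h₁ + h₂)`, since the flux difference factors through `h₂ - h₁`.
Dividing by `g h₁³` and writing `r = h₂ / h₁` gives `r² + r = 2 F₁²`, i.e.
`1 + 8 F₁² = (1 + 2 r)²`, and `r > 0` selects the positive square root.
-/

noncomputable section

namespace OpenChannel

def momentumFlux (g q h : ℝ) : ℝ := q ^ 2 / h + g * h ^ 2 / 2

def froudeSq (g q h : ℝ) : ℝ := q ^ 2 / (g * h ^ 3)

theorem momentumFlux_sub_momentumFlux (g q : ℝ) {h₁ h₂ : ℝ} (hh₁ : h₁ ≠ 0) (hh₂ : h₂ ≠ 0) :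
    momentumFlux g q h₂ - momentumFlux g q h₁ =
      (h₂ - h₁) * (g * h₁ * h₂ * (h₁ + h₂) - 2 * q ^ 2) / (2 * h₁ * h₂) := by
  unfold momentumFlux
  field_simp
  ring

theorem conjugate_depths_of_momentumFlux_eq {g q h₁ h₂ : ℝ} (hh₁ : h₁ ≠ 0) (hh₂ : h₂ ≠ 0)
    (hne : h₁ ≠ h₂) (hmom : momentumFlux g q h₁ = momentumFlux g q h₂) :
    2 * q ^ 2 = g * h₁ * h₂ * (h₁ + h₂) := by
  have hdiff := momentumFlux_sub_momentumFlux g q hh₁ hh₂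
  rw [hmom, sub_self, eq_comm, div_eq_zero_iff, or_iff_left (by positivity)] at hdiff
  have := (mul_eq_zero.mp hdiff).resolve_left (sub_ne_zero.mpr hne.symm)
  linarith

theorem one_add_eight_mul_froudeSq_of_conjugate_depths {g q h₁ h₂ : ℝ} (hg : g ≠ 0)
    (hh₁ : h₁ ≠ 0) (hconj : 2 * q ^ 2 = g * h₁ * h₂ * (h₁ + h₂)) :
    1 + 8 * froudeSq g q h₁ = (1 + 2 * (h₂ / h₁)) ^ 2 := by
  unfold froudeSq
  field_simp
  linear_combination 4 * hconj

theorem div_eq_of_conjugate_depths {g q h₁ h₂ : ℝ} (hg : g ≠ 0) (hh₁ : 0 < h₁) (hh₂ : 0 < h₂)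
    (hconj : 2 * q ^ 2 = g * h₁ * h₂ * (h₁ + h₂)) :
    h₂ / h₁ = (-1 + Real.sqrt (1 + 8 * froudeSq g q h₁)) / 2 := by
  rw [one_add_eight_mul_froudeSq_of_conjugate_depths hg hh₁.ne' hconj,
    Real.sqrt_sq (by positivity)]
  ring

end OpenChannel

end

/-- At a junction with common discharge `q` and equal momentum flux, the two
heights either coincide or satisfy `h₂/h₁ = (−1 + √(1 + 8 F₁²))/2`. -/
theorem equal_momentum_height_ratio (g h₁ h₂ q : ℝ) (hg : 0 < g)
    (hh₁ : 0 < h₁) (hh₂ : 0 < h₂)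
    (hmom : q ^ 2 / h₁ + g * h₁ ^ 2 / 2 = q ^ 2 / h₂ + g * h₂ ^ 2 / 2) :
    h₁ = h₂ ∨
      h₂ / h₁ = (-1 + Real.sqrt (1 + 8 * (q ^ 2 / (g * h₁ ^ 3)))) / 2 := by
  refine or_iff_not_imp_left.mpr fun hne => ?_
  have hconj := OpenChannel.conjugate_depths_of_momentumFlux_eq hh₁.ne' hh₂.ne' hne hmom
  exact OpenChannel.div_eq_of_conjugate_depths hg.ne' hh₁ hh₂ hconj
end
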